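/- (Time regularity of the lower barrier.) For the delta− interface evolution φ_t^{δ,−} started from a 1-Lipschitz φ ≥ |r| equal to |r| outside a compact: G_s φ_t^{δ,−} ≤ φ_{t+s}^{δ,−} ≤ G_s φ_t^{δ,−} + j(s + δ) for all t ≥ 0, s > 0. Consequently |φ_{t+s}^{δ,−}(r) − φ_t^{δ,−}(r)| ≤ c√s + j(s + δ) for a constant c depending only on the Lipschitz constant, uniformly in r, t and δ ≤ 1. -/

import Mathlib

open MeasureTheory
open scoped Classical

/-- The Gaussian heat kernel. -/
noncomputable def gaussK (t r r' : ℝ) : ℝ :=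
  Real.exp (-(r - r') ^ 2 / (2 * t)) / Real.sqrt (2 * Real.pi * t)

/-- The heat semigroup applied to an interface. -/
noncomputable def heatEvol (t : ℝ) (f : ℝ → ℝ) (r : ℝ) : ℝ :=
  ∫ r', gaussK t r r' * f r'

/-- The delta⁻ interface evolution sampled at times `kδ`. -/
noncomputable def deltaMinus (j δ : ℝ) (φ : ℝ → ℝ) : ℕ → ℝ → ℝ
  | 0 => φ
  | k + 1 => fun r =>
      max (heatEvol δ (deltaMinus j δ φ k) r) (|r| + ((k : ℝ) + 1) * j * δ)

/-- The delta⁻ interface evolution in continuous time: at the grid times `kδ` it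
is the discrete evolution, and inside `(kδ,(k+1)δ)` it is the heat evolution of
the profile at the last grid time. -/

noncomputable def deltaMinusT (j δ : ℝ) (φ : ℝ → ℝ) (t : ℝ) : ℝ → ℝ :=
  if h : ∃ k : ℕ, t = (k : ℝ) * δ then deltaMinus j δ φ h.choose
  else heatEvol (t - ⌊t / δ⌋ * δ) (deltaMinus j δ φ (⌊t / δ⌋).toNat)

/-!
`heatEvol s f r` integrates `f` against the Gaussian `N(r, s)`, so on Lipschitz functions it is a
monotone semigroup (Gaussians convolve to Gaussians) and moves a `K`-Lipschitz `f` by at most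
`K · E|W_s| ≤ K √s`. The max-update at a grid time only raises the profile, and by at most `jδ`,
because the profile before the update already lies above the previous cone `|r| + kjδ`.
Hence `G_{u-t} φ_t ≤ φ_u ≤ G_{u-t} φ_t + e` holds with `e = jδ` times the number of grid times in
`(t, u]`; such bounds compose along the semigroup, and `(t, t + s]` contains at most `s/δ + 1`
grid times.
-/

open ProbabilityTheory
open scoped NNReal

section HeatSemigroup

variable {K K' : ℝ≥0} {f g : ℝ → ℝ} {s t : ℝ}

theorem heatEvol_eq_integral_gaussianReal (ht : 0 < t) (f : ℝ → ℝ) (r : ℝ) :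
    heatEvol t f r = ∫ x, f x ∂gaussianReal r t.toNNReal := by
  rw [integral_gaussianReal_eq_integral_smul (by simpa using ht)]
  refine integral_congr_ae (ae_of_all _ fun x => ?_)
  simp only [gaussK, gaussianPDFReal, Real.coe_toNNReal _ ht.le, smul_eq_mul]
  ring_nf

theorem heatEvol_eq_integral_const_add (ht : 0 < t) (f : ℝ → ℝ) (r : ℝ) :
    heatEvol t f r = ∫ x, f (r + x) ∂gaussianReal 0 t.toNNReal := by
  rw [heatEvol_eq_integral_gaussianReal ht, ← (measurableEmbedding_addLeft r).integral_map,
    gaussianReal_map_const_add, zero_add]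

theorem LipschitzWith.integrable_gaussianReal (hf : LipschitzWith K f) (μ : ℝ) (v : ℝ≥0) :
    Integrable f (gaussianReal μ v) := by
  have hid : Integrable id (gaussianReal μ v) := (memLp_id_gaussianReal 1).integrable le_rfl
  refine ((integrable_const ‖f 0‖).add (hid.norm.const_mul K)).mono'
    hf.continuous.aestronglyMeasurable (ae_of_all _ fun x => ?_)
  have hlip := hf.norm_sub_le x 0
  rw [sub_zero] at hlip
  have := norm_le_insert' (f x) (f 0)
  simp only [Pi.add_apply, id]
  linarith

theorem integral_abs_sub_le_sqrt_gaussianReal (μ : ℝ) (v : ℝ≥0) :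
    ∫ x, |x - μ| ∂gaussianReal μ v ≤ √v := by
  have hL2 : MemLp (fun x => |x - μ|) 2 (gaussianReal μ v) :=
    ((memLp_id_gaussianReal 2).sub (memLp_const μ)).abs
  have hsq : ∫ x, |x - μ| ^ 2 ∂gaussianReal μ v = v := by
    simp only [sq_abs]
    rw [← variance_fun_id_gaussianReal (μ := μ) (v := v),
      variance_eq_integral aemeasurable_id', integral_id_gaussianReal]
  have hvar := variance_nonneg (fun x => |x - μ|) (gaussianReal μ v)
  rw [variance_eq_sub hL2] at hvar
  simp only [Pi.pow_apply] at hvar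
  rw [hsq] at hvar
  exact Real.le_sqrt_of_sq_le (by linarith)

theorem heatEvol_mono (hf : LipschitzWith K f) (hg : LipschitzWith K' g) (ht : 0 < t)
    (hfg : ∀ x, f x ≤ g x) (r : ℝ) : heatEvol t f r ≤ heatEvol t g r := by
  simp only [heatEvol_eq_integral_gaussianReal ht]
  exact integral_mono (hf.integrable_gaussianReal _ _) (hg.integrable_gaussianReal _ _) hfg

theorem heatEvol_add_const (hf : LipschitzWith K f) (ht : 0 < t) (c r : ℝ) :
    heatEvol t (fun x => f x + c) r = heatEvol t f r + c := by
  simp only [heatEvol_eq_integral_gaussianReal ht]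
  rw [integral_add (hf.integrable_gaussianReal _ _) (integrable_const c), integral_const,
    probReal_univ, one_smul]

theorem abs_add_le_heatEvol (hf : LipschitzWith K f) (ht : 0 < t) {c : ℝ}
    (hcone : ∀ x, |x| + c ≤ f x) (r : ℝ) : |r| + c ≤ heatEvol t f r := by
  have habs : Integrable (fun x => |x|) (gaussianReal r t.toNNReal) :=
    ((memLp_id_gaussianReal 1).integrable le_rfl).abs
  rw [heatEvol_eq_integral_gaussianReal ht]
  calc |r| + c = |∫ x, x ∂gaussianReal r t.toNNReal| + c := by rw [integral_id_gaussianReal]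
    _ ≤ ∫ x, |x| ∂gaussianReal r t.toNNReal + c := by gcongr; exact abs_integral_le_integral_abs
    _ = ∫ x, (|x| + c) ∂gaussianReal r t.toNNReal := by
        rw [integral_add habs (integrable_const c), integral_const, probReal_univ, one_smul]
    _ ≤ ∫ x, f x ∂gaussianReal r t.toNNReal :=
        integral_mono (habs.add (integrable_const c)) (hf.integrable_gaussianReal _ _) hcone

theorem LipschitzWith.heatEvol (hf : LipschitzWith K f) (ht : 0 < t) :
    LipschitzWith K (heatEvol t f) := by
  refine LipschitzWith.of_dist_le_mul fun a b => ?_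
  have hshift (y : ℝ) : LipschitzWith K (fun x => f (y + x)) := by
    have h := hf.comp (isometry_add_left y).lipschitz
    rwa [mul_one] at h
  simp only [Real.dist_eq, heatEvol_eq_integral_const_add ht]
  rw [← integral_sub ((hshift a).integrable_gaussianReal _ _)
    ((hshift b).integrable_gaussianReal _ _)]
  have := norm_integral_le_of_norm_le_const (μ := gaussianReal 0 t.toNNReal)
    (f := fun x => f (a + x) - f (b + x))
    (ae_of_all _ fun x => by simpa using hf.norm_sub_le (a + x) (b + x))
  simpa using this

theorem abs_heatEvol_sub_le (hf : LipschitzWith K f) (ht : 0 < t) (r : ℝ) :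
    |heatEvol t f r - f r| ≤ K * √t := by
  have hdev : Integrable (fun x => |x - r|) (gaussianReal r t.toNNReal) :=
    (((memLp_id_gaussianReal 1).integrable le_rfl).sub (integrable_const r)).abs
  rw [heatEvol_eq_integral_gaussianReal ht]
  calc |∫ x, f x ∂gaussianReal r t.toNNReal - f r|
      = |∫ x, (f x - f r) ∂gaussianReal r t.toNNReal| := by
        rw [integral_sub (hf.integrable_gaussianReal _ _) (integrable_const _), integral_const,
          probReal_univ, one_smul]
    _ ≤ ∫ x, |f x - f r| ∂gaussianReal r t.toNNReal := abs_integral_le_integral_abs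
    _ ≤ ∫ x, K * |x - r| ∂gaussianReal r t.toNNReal :=
        integral_mono_of_nonneg (ae_of_all _ fun _ => abs_nonneg _) (hdev.const_mul _)
          (ae_of_all _ fun x => hf.norm_sub_le x r)
    _ ≤ K * √t := by
        rw [integral_const_mul]
        gcongr
        simpa [Real.coe_toNNReal _ ht.le] using integral_abs_sub_le_sqrt_gaussianReal r t.toNNReal

theorem heatEvol_heatEvol (hf : LipschitzWith K f) (hs : 0 < s) (ht : 0 < t) :
    heatEvol s (heatEvol t f) = heatEvol (t + s) f := by
  ext r
  have hconv : gaussianReal r s.toNNReal ∗ gaussianReal 0 t.toNNReal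
      = gaussianReal r (t + s).toNNReal := by
    rw [gaussianReal_conv_gaussianReal, add_zero, Real.toNNReal_add ht.le hs.le, add_comm]
  have hint : Integrable (fun p : ℝ × ℝ => f (p.1 + p.2))
      ((gaussianReal r s.toNNReal).prod (gaussianReal 0 t.toNNReal)) := by
    refine (integrable_map_measure hf.continuous.aestronglyMeasurable
      measurable_add.aemeasurable).1 ?_
    rw [← Measure.conv, hconv]
    exact hf.integrable_gaussianReal _ _
  simp only [heatEvol_eq_integral_gaussianReal hs,
    heatEvol_eq_integral_gaussianReal (add_pos ht hs), heatEvol_eq_integral_const_add ht]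
  rw [← integral_prod _ hint, ← hconv, Measure.conv,
    integral_map measurable_add.aemeasurable hf.continuous.aestronglyMeasurable]

end HeatSemigroup

-- Only meaningful for `s > 0`: `heatEvol 0 f = 0`, since `gaussK 0` divides by zero.
def HeatSandwich (s : ℝ) (f g : ℝ → ℝ) (e : ℝ) : Prop :=
  ∀ r, heatEvol s f r ≤ g r ∧ g r ≤ heatEvol s f r + e

namespace HeatSandwich

variable {K K' : ℝ≥0} {f g h : ℝ → ℝ} {s s' e e' : ℝ}

theorem of_eq (hg : g = heatEvol s f) : HeatSandwich s f g 0 := by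
  subst hg
  exact fun r => ⟨le_rfl, (add_zero _).ge⟩

theorem mono_error (h : HeatSandwich s f g e) (he : e ≤ e') : HeatSandwich s f g e' :=
  fun r => ⟨(h r).1, (h r).2.trans (by linarith)⟩

theorem trans (hfg : HeatSandwich s f g e) (hgh : HeatSandwich s' g h e')
    (hf : LipschitzWith K f) (hg : LipschitzWith K' g) (hs : 0 < s) (hs' : 0 < s') :
    HeatSandwich (s + s') f h (e + e') := by
  have hGf := hf.heatEvol hs
  have hGf_add : LipschitzWith K (fun x => heatEvol s f x + e) := by
    simpa using hGf.add (LipschitzWith.const e)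
  intro r
  rw [← heatEvol_heatEvol hf hs' hs]
  constructor
  · exact (heatEvol_mono hGf hg hs' (fun x => (hfg x).1) r).trans (hgh r).1
  · calc h r ≤ heatEvol s' g r + e' := (hgh r).2
      _ ≤ heatEvol s' (fun x => heatEvol s f x + e) r + e' := by
          gcongr
          exact heatEvol_mono hg hGf_add hs' (fun x => (hfg x).2) r
      _ = heatEvol s' (heatEvol s f) r + (e + e') := by
          rw [heatEvol_add_const hGf hs']
          ring

end HeatSandwich

theorem lipschitzWith_abs_add_const (c : ℝ) : LipschitzWith 1 (fun x : ℝ => |x| + c) :=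
  LipschitzWith.of_le_add fun x y => by
    rw [Real.dist_eq]
    linarith [abs_sub_abs_le_abs_sub x y]

theorem mem_Ico_natFloor_div_mul {δ t : ℝ} (hδ : 0 < δ) (ht : 0 ≤ t) :
    t ∈ Set.Ico (⌊t / δ⌋₊ * δ) ((⌊t / δ⌋₊ + 1) * δ) :=
  ⟨(le_div_iff₀ hδ).1 (Nat.floor_le (div_nonneg ht hδ.le)),
    (div_lt_iff₀ hδ).1 (Nat.lt_floor_add_one _)⟩

section DeltaMinus

variable {K : ℝ≥0} {j δ t u : ℝ} {φ : ℝ → ℝ} {k n : ℕ}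

theorem abs_add_le_deltaMinus (hge : ∀ r, |r| ≤ φ r) (k : ℕ) (r : ℝ) :
    |r| + k * j * δ ≤ deltaMinus j δ φ k r := by
  cases k with
  | zero => simpa [deltaMinus] using hge r
  | succ k => exact le_max_of_le_right (by push_cast; rfl)

theorem lipschitzWith_deltaMinus (hφ : LipschitzWith K φ) (hK : 1 ≤ K) (hδ : 0 < δ) (k : ℕ) :
    LipschitzWith K (deltaMinus j δ φ k) := by
  induction k with
  | zero => exact hφ
  | succ k ih =>
    have h := (ih.heatEvol hδ).max (lipschitzWith_abs_add_const (((k : ℝ) + 1) * j * δ))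
    rwa [max_eq_left hK] at h

theorem heatSandwich_deltaMinus_succ (hφ : LipschitzWith K φ) (hK : 1 ≤ K)
    (hge : ∀ r, |r| ≤ φ r) (hj : 0 ≤ j) (hδ : 0 < δ) (k : ℕ) :
    HeatSandwich δ (deltaMinus j δ φ k) (deltaMinus j δ φ (k + 1)) (j * δ) := by
  intro r
  have hcone := abs_add_le_heatEvol (lipschitzWith_deltaMinus (j := j) hφ hK hδ k) hδ
    (abs_add_le_deltaMinus hge k) r
  refine ⟨le_max_left _ _, max_le (le_add_of_nonneg_right (by positivity)) ?_⟩
  linarith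

theorem deltaMinusT_natCast_mul (hδ : δ ≠ 0) (k : ℕ) :
    deltaMinusT j δ φ (k * δ) = deltaMinus j δ φ k := by
  have h : ∃ n : ℕ, (k : ℝ) * δ = n * δ := ⟨k, rfl⟩
  rw [deltaMinusT, dif_pos h]
  congr
  exact_mod_cast (mul_right_cancel₀ hδ h.choose_spec).symm

theorem deltaMinusT_of_mem_Ioo (hδ : 0 < δ) (ht : t ∈ Set.Ioo (k * δ) ((k + 1) * δ)) :
    deltaMinusT j δ φ t = heatEvol (t - k * δ) (deltaMinus j δ φ k) := by
  have hfloor : ⌊t / δ⌋ = k := by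
    rw [Int.floor_eq_iff, le_div_iff₀ hδ, div_lt_iff₀ hδ]
    push_cast
    exact ⟨ht.1.le, ht.2⟩
  have hgrid : ¬ ∃ n : ℕ, t = n * δ := by
    rintro ⟨n, rfl⟩
    have h1 : k < n := by exact_mod_cast lt_of_mul_lt_mul_right ht.1 hδ.le
    have h2 : n < k + 1 := by exact_mod_cast lt_of_mul_lt_mul_right ht.2 hδ.le
    omega
  rw [deltaMinusT, dif_neg hgrid, hfloor]
  rfl

theorem lipschitzWith_deltaMinusT (hφ : LipschitzWith K φ) (hK : 1 ≤ K) (hδ : 0 < δ)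
    (ht : t ∈ Set.Ico (k * δ) ((k + 1) * δ)) : LipschitzWith K (deltaMinusT j δ φ t) := by
  rcases ht.1.eq_or_lt with rfl | hkt
  · rw [deltaMinusT_natCast_mul hδ.ne']
    exact lipschitzWith_deltaMinus hφ hK hδ k
  · rw [deltaMinusT_of_mem_Ioo hδ ⟨hkt, ht.2⟩]
    exact (lipschitzWith_deltaMinus hφ hK hδ k).heatEvol (by linarith)

theorem heatEvol_deltaMinusT_of_mem_Ico (hφ : LipschitzWith K φ) (hK : 1 ≤ K) (hδ : 0 < δ)
    (ht : t ∈ Set.Ico (k * δ) ((k + 1) * δ)) (htu : t < u) :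
    heatEvol (u - t) (deltaMinusT j δ φ t) = heatEvol (u - k * δ) (deltaMinus j δ φ k) := by
  rcases ht.1.eq_or_lt with rfl | hkt
  · rw [deltaMinusT_natCast_mul hδ.ne']
  · rw [deltaMinusT_of_mem_Ioo hδ ⟨hkt, ht.2⟩,
      heatEvol_heatEvol (lipschitzWith_deltaMinus hφ hK hδ k) (by linarith) (by linarith)]
    ring_nf

theorem heatSandwich_deltaMinusT_of_lt (hφ : LipschitzWith K φ) (hK : 1 ≤ K) (hδ : 0 < δ)
    (ht : t ∈ Set.Ico (k * δ) ((k + 1) * δ)) (htu : t < u) (hu : u < (k + 1) * δ) :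
    HeatSandwich (u - t) (deltaMinusT j δ φ t) (deltaMinusT j δ φ u) 0 := by
  refine HeatSandwich.of_eq ?_
  rw [heatEvol_deltaMinusT_of_mem_Ico hφ hK hδ ht htu,
    deltaMinusT_of_mem_Ioo hδ ⟨ht.1.trans_lt htu, hu⟩]

theorem heatSandwich_deltaMinusT_succ (hφ : LipschitzWith K φ) (hK : 1 ≤ K)
    (hge : ∀ r, |r| ≤ φ r) (hj : 0 ≤ j) (hδ : 0 < δ) (ht : t ∈ Set.Ico (k * δ) ((k + 1) * δ)) :
    HeatSandwich ((k + 1) * δ - t) (deltaMinusT j δ φ t) (deltaMinusT j δ φ ((k + 1) * δ))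
      (j * δ) := by
  have hgrid := deltaMinusT_natCast_mul (j := j) (φ := φ) hδ.ne' (k + 1)
  push_cast at hgrid
  intro r
  rw [heatEvol_deltaMinusT_of_mem_Ico hφ hK hδ ht ht.2, hgrid,
    show (k + 1) * δ - k * δ = δ by ring]
  exact heatSandwich_deltaMinus_succ hφ hK hge hj hδ k r

theorem heatSandwich_deltaMinusT_natCast_mul (hφ : LipschitzWith K φ) (hK : 1 ≤ K)
    (hge : ∀ r, |r| ≤ φ r) (hj : 0 ≤ j) (hδ : 0 < δ) (ht : t ∈ Set.Ico (k * δ) ((k + 1) * δ))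
    (hkn : k < n) :
    HeatSandwich (n * δ - t) (deltaMinusT j δ φ t) (deltaMinusT j δ φ (n * δ))
      ((n - k) * (j * δ)) := by
  induction n, hkn using Nat.le_induction with
  | base =>
    push_cast
    rw [add_sub_cancel_left, one_mul]
    exact heatSandwich_deltaMinusT_succ hφ hK hge hj hδ ht
  | succ n hkn ih =>
    have hn : (n : ℝ) * δ ∈ Set.Ico (n * δ) ((n + 1) * δ) := ⟨le_rfl, by linarith⟩
    have hkn' : ((k + 1 : ℕ) : ℝ) ≤ n := by exact_mod_cast hkn
    push_cast at hkn' ⊢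
    convert (ih.trans (heatSandwich_deltaMinusT_succ hφ hK hge hj hδ hn)
      (lipschitzWith_deltaMinusT hφ hK hδ ht) (lipschitzWith_deltaMinusT hφ hK hδ hn)
      (by nlinarith [ht.2]) (by linarith)) using 1 <;> ring

theorem heatSandwich_deltaMinusT (hφ : LipschitzWith K φ) (hK : 1 ≤ K)
    (hge : ∀ r, |r| ≤ φ r) (hj : 0 ≤ j) (hδ : 0 < δ) (ht : t ∈ Set.Ico (k * δ) ((k + 1) * δ))
    (htu : t < u) (hu : u ∈ Set.Ico (n * δ) ((n + 1) * δ)) :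
    HeatSandwich (u - t) (deltaMinusT j δ φ t) (deltaMinusT j δ φ u) ((n - k) * (j * δ)) := by
  have hkn : k < n + 1 := by
    exact_mod_cast lt_of_mul_lt_mul_right (ht.1.trans_lt (htu.trans hu.2)) hδ.le
  replace hkn : k ≤ n := by omega
  rcases hkn.eq_or_lt with rfl | hkn
  · simpa using heatSandwich_deltaMinusT_of_lt hφ hK hδ ht htu hu.2
  rcases hu.1.eq_or_lt with rfl | hnu
  · exact heatSandwich_deltaMinusT_natCast_mul hφ hK hge hj hδ ht hkn
  have hgrid : (n : ℝ) * δ ∈ Set.Ico (n * δ) ((n + 1) * δ) := ⟨le_rfl, by linarith [hu.2]⟩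
  have hkn' : ((k + 1 : ℕ) : ℝ) ≤ n := by exact_mod_cast hkn
  push_cast at hkn'
  convert (heatSandwich_deltaMinusT_natCast_mul hφ hK hge hj hδ ht hkn).trans
    (heatSandwich_deltaMinusT_of_lt hφ hK hδ hgrid hnu hu.2)
    (lipschitzWith_deltaMinusT hφ hK hδ ht) (lipschitzWith_deltaMinusT hφ hK hδ hgrid)
    (by nlinarith [ht.2]) (by linarith) using 1 <;> ring

end DeltaMinus

theorem delta_minus_time_regularity_general (j : ℝ) (hj : 0 < j)
    (φ : ℝ → ℝ) (hlip : LipschitzWith 1 φ) (hge : ∀ r : ℝ, |r| ≤ φ r) :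
    (∀ δ : ℝ, 0 < δ → ∀ t : ℝ, 0 ≤ t → ∀ s : ℝ, 0 < s → ∀ r : ℝ,
      heatEvol s (deltaMinusT j δ φ t) r ≤ deltaMinusT j δ φ (t + s) r ∧
      deltaMinusT j δ φ (t + s) r
        ≤ heatEvol s (deltaMinusT j δ φ t) r + j * (s + δ)) ∧
    (∃ c : ℝ, 0 < c ∧ ∀ δ : ℝ, 0 < δ → δ ≤ 1 →
      ∀ t : ℝ, 0 ≤ t → ∀ s : ℝ, 0 < s → ∀ r : ℝ,
        |deltaMinusT j δ φ (t + s) r - deltaMinusT j δ φ t r|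
          ≤ c * Real.sqrt s + j * (s + δ)) := by
  have hsandwich : ∀ δ : ℝ, 0 < δ → ∀ t : ℝ, 0 ≤ t → ∀ s : ℝ, 0 < s →
      HeatSandwich s (deltaMinusT j δ φ t) (deltaMinusT j δ φ (t + s)) (j * (s + δ)) := by
    intro δ hδ t ht s hs
    have hk := mem_Ico_natFloor_div_mul hδ ht
    have hn := mem_Ico_natFloor_div_mul hδ (add_nonneg ht hs.le)
    have hcount : ((⌊(t + s) / δ⌋₊ : ℝ) - ⌊t / δ⌋₊) * (j * δ) ≤ j * (s + δ) := by
      have : ((⌊(t + s) / δ⌋₊ : ℝ) - ⌊t / δ⌋₊) * δ ≤ s + δ := by linarith [hk.2, hn.1]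
      nlinarith
    simpa using (heatSandwich_deltaMinusT hlip le_rfl hge hj.le hδ hk (by linarith) hn).mono_error
      hcount
  refine ⟨hsandwich, 1, one_pos, fun δ hδ _ t ht s hs r => ?_⟩
  have hmod := abs_heatEvol_sub_le
    (lipschitzWith_deltaMinusT (j := j) hlip le_rfl hδ (mem_Ico_natFloor_div_mul hδ ht)) hs r
  obtain ⟨hlow, hup⟩ := hsandwich δ hδ t ht s hs r
  rw [NNReal.coe_one] at hmod
  rw [abs_le] at hmod ⊢
  constructor <;> linarith [hmod.1, hmod.2]

/-- (Time regularity of the lower barrier.) For every `δ > 0`, `t ≥ 0`, `s > 0`: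
`G_s φ_t^{δ,−} ≤ φ_{t+s}^{δ,−} ≤ G_s φ_t^{δ,−} + j(s+δ)`; consequently there is a
constant `c > 0`, depending only on the Lipschitz constant and uniform in
`r`, `t` and `δ ≤ 1`, such that `|φ_{t+s}^{δ,−}(r) − φ_t^{δ,−}(r)| ≤ c√s + j(s+δ)`. -/
theorem delta_minus_time_regularity (j : ℝ) (hj : 0 < j)
    (φ : ℝ → ℝ) (hlip : LipschitzWith 1 φ) (hge : ∀ r : ℝ, |r| ≤ φ r)
    (hcone : ∃ M : ℝ, ∀ r : ℝ, M ≤ |r| → φ r = |r|) :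
    (∀ δ : ℝ, 0 < δ → ∀ t : ℝ, 0 ≤ t → ∀ s : ℝ, 0 < s → ∀ r : ℝ,
      heatEvol s (deltaMinusT j δ φ t) r ≤ deltaMinusT j δ φ (t + s) r ∧
      deltaMinusT j δ φ (t + s) r
        ≤ heatEvol s (deltaMinusT j δ φ t) r + j * (s + δ)) ∧
    (∃ c : ℝ, 0 < c ∧ ∀ δ : ℝ, 0 < δ → δ ≤ 1 →
      ∀ t : ℝ, 0 ≤ t → ∀ s : ℝ, 0 < s → ∀ r : ℝ,
        |deltaMinusT j δ φ (t + s) r - deltaMinusT j δ φ t r|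
          ≤ c * Real.sqrt s + j * (s + δ)) :=
  delta_minus_time_regularity_general j hj φ hlip hge
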